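/- If p is an integer Chebyshev polynomial of degree n for the interval [0,1/4] (that is, p has integer coefficients, degree n, and (sup_{y∈[0,1/4]} |p(y)|)^{1/n} = t_{ℤ,n}([0,1/4])), then the polynomial q(x) = p(x(1−x)) is an integer Chebyshev polynomial of degree 2n for the interval [0,1], i.e. (sup_{x∈[0,1]} |q(x)|)^{1/(2n)} = t_{ℤ,2n}([0,1]). -/

import Mathlib

open Polynomial Filter

/-- The supremum norm of an integer polynomial on the interval `[a, b]`. -/
noncomputable def supNorm (p : Polynomial ℤ) (a b : ℝ) : ℝ :=
  sSup ((fun x => |Polynomial.aeval x p|) '' Set.Icc a b)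

/-- `tZ n a b` is the infimum over nonzero integer polynomials `p` of degree at most `n`
of `(sup_{x ∈ [a,b]} |p(x)|)^(1/n)`. -/
noncomputable def tZ (n : ℕ) (a b : ℝ) : ℝ :=
  sInf {r : ℝ | ∃ p : Polynomial ℤ, p ≠ 0 ∧ p.natDegree ≤ n ∧
    r = supNorm p a b ^ ((1 : ℝ) / n)}

/-!
Write an integer polynomial `r` of degree `≤ 2n` as `r = A(u) + x B(u)` with `u = x(1 - x)`,
where `A` and `B` are integer polynomials of degrees `≤ n` and `< n`. For `y ∈ [0, 1/4]` the
two preimages `x, 1 - x ∈ [0, 1]` of `y` under `u` give the values `A(y) + t B(y)` for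
`t = x, 1 - x`, and this is affine in `t`; so `|A(y) + t B(y)| ≤ ‖r‖_[0,1]` for every `t` between
them, in particular for `t = 2y` and `t = 1 - 2y`. One of `A + 2X B`, `A + (1 - 2X) B` is nonzero,
has degree `≤ n` and sup norm on `[0, 1/4]` at most `‖r‖_[0,1]`, hence at least `‖p‖_[0,1/4]`
by the minimality of `p`. Since `u` maps `[0, 1]` onto `[0, 1/4]`, `‖p ∘ u‖_[0,1] = ‖p‖_[0,1/4]`.
-/

open Set

section SupNorm

variable {a b : ℝ}

lemma bddAbove_abs_aeval_image (p : ℤ[X]) (a b : ℝ) :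
    BddAbove ((fun x => |aeval x p|) '' Icc a b) :=
  (isCompact_Icc.image p.continuous_aeval.abs).bddAbove

lemma abs_aeval_le_supNorm (p : ℤ[X]) {x : ℝ} (hx : x ∈ Icc a b) :
    |aeval x p| ≤ supNorm p a b :=
  le_csSup (bddAbove_abs_aeval_image p a b) (mem_image_of_mem _ hx)

lemma supNorm_le {p : ℤ[X]} {K : ℝ} (hab : a ≤ b) (h : ∀ x ∈ Icc a b, |aeval x p| ≤ K) :
    supNorm p a b ≤ K :=
  csSup_le ((nonempty_Icc.2 hab).image _) (forall_mem_image.2 h)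

lemma supNorm_nonneg (p : ℤ[X]) (hab : a ≤ b) : 0 ≤ supNorm p a b :=
  (abs_nonneg _).trans (abs_aeval_le_supNorm p (left_mem_Icc.2 hab))

lemma supNorm_comp (p f : ℤ[X]) {c d : ℝ} (hf : (fun x => aeval x f) '' Icc a b = Icc c d) :
    supNorm (p.comp f) a b = supNorm p c d := by
  simp only [_root_.supNorm, aeval_comp, ← hf, image_image]

end SupNorm

section IntegerChebyshev

variable {n : ℕ} {a b : ℝ}

lemma tZ_le (hab : a ≤ b) {g : ℤ[X]} (hg0 : g ≠ 0) (hg : g.natDegree ≤ n) :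
    tZ n a b ≤ supNorm g a b ^ ((1 : ℝ) / n) :=
  csInf_le ⟨0, by rintro _ ⟨q, -, -, rfl⟩; exact Real.rpow_nonneg (supNorm_nonneg q hab) _⟩
    ⟨g, hg0, hg, rfl⟩

lemma le_tZ {c : ℝ}
    (h : ∀ g : ℤ[X], g ≠ 0 → g.natDegree ≤ n → c ≤ supNorm g a b ^ ((1 : ℝ) / n)) :
    c ≤ tZ n a b :=
  le_csInf ⟨_, 1, one_ne_zero, by simp, rfl⟩ fun _ ⟨g, hg0, hg, hc⟩ => hc ▸ h g hg0 hg

lemma supNorm_le_of_rpow_eq_tZ (hn : 0 < n) (hab : a ≤ b) {p g : ℤ[X]}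
    (hp : supNorm p a b ^ ((1 : ℝ) / n) = tZ n a b) (hg0 : g ≠ 0) (hg : g.natDegree ≤ n) :
    supNorm p a b ≤ supNorm g a b :=
  (Real.rpow_le_rpow_iff (supNorm_nonneg p hab) (supNorm_nonneg g hab) (by positivity)).1
    (hp ▸ tZ_le hab hg0 hg)

end IntegerChebyshev

section Decomposition

variable {R : Type*} [CommRing R]

lemma natDegree_le_natDegree_add_of_ne {p q : R[X]} (h : p.natDegree ≠ q.natDegree) :
    p.natDegree ≤ (p + q).natDegree ∧ q.natDegree ≤ (p + q).natDegree := by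
  rcases h.lt_or_gt with h | h
  · rw [natDegree_add_eq_right_of_natDegree_lt h]; exact ⟨h.le, le_rfl⟩
  · rw [natDegree_add_eq_left_of_natDegree_lt h]; exact ⟨le_rfl, h.le⟩

lemma exists_eq_comp_add_X_mul_comp (r : R[X]) :
    ∃ A B : R[X], r = A.comp (X * (1 - X)) + X * B.comp (X * (1 - X)) := by
  induction r using Polynomial.induction_on with
  | C a => exact ⟨C a, 0, by simp⟩
  | add p q hp hq =>
    obtain ⟨A, B, rfl⟩ := hp
    obtain ⟨A', B', rfl⟩ := hq
    exact ⟨A + A', B + B', by simp only [add_comp]; ring⟩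
  | monomial k a h =>
    obtain ⟨A, B, h⟩ := h
    -- `X ^ 2 = X - X * (1 - X)` lowers the power of `X` in front of `B`
    refine ⟨-X * B, A + B, ?_⟩
    rw [pow_succ, ← mul_assoc, h, mul_comp, neg_comp, X_comp, add_comp]
    ring

variable [IsDomain R]

lemma natDegree_X_mul_one_sub_X : (X * (1 - X) : R[X]).natDegree = 2 := by
  compute_degree!

lemma natDegree_comp_X_mul_one_sub_X (A : R[X]) :
    (A.comp (X * (1 - X))).natDegree = 2 * A.natDegree := by
  rw [natDegree_comp, natDegree_X_mul_one_sub_X, mul_comm]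

lemma natDegree_X_mul_comp_X_mul_one_sub_X {B : R[X]} (hB : B ≠ 0) :
    (X * B.comp (X * (1 - X))).natDegree = 2 * B.natDegree + 1 := by
  have hu : (X * (1 - X) : R[X]) ≠ 0 := by
    intro h; simpa [h] using (natDegree_X_mul_one_sub_X (R := R))
  have hBu : B.comp (X * (1 - X)) ≠ 0 := by
    rw [← leadingCoeff_ne_zero, leadingCoeff_comp (by rw [natDegree_X_mul_one_sub_X]; simp)]
    exact mul_ne_zero (leadingCoeff_ne_zero.2 hB) (pow_ne_zero _ (leadingCoeff_ne_zero.2 hu))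
  rw [natDegree_X_mul hBu, natDegree_comp_X_mul_one_sub_X]

lemma natDegree_le_of_eq_comp_add_X_mul_comp {n : ℕ} (hn : 0 < n) {r A B : R[X]}
    (hr : r = A.comp (X * (1 - X)) + X * B.comp (X * (1 - X))) (hdeg : r.natDegree ≤ 2 * n) :
    A.natDegree ≤ n ∧ B.natDegree < n := by
  by_cases hB : B = 0
  · subst hB
    rw [hr, zero_comp, mul_zero, add_zero, natDegree_comp_X_mul_one_sub_X] at hdeg
    exact ⟨by omega, by simpa using hn⟩
  · have hA := natDegree_comp_X_mul_one_sub_X A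
    have hXB := natDegree_X_mul_comp_X_mul_one_sub_X hB
    have := natDegree_le_natDegree_add_of_ne
      (p := A.comp (X * (1 - X))) (q := X * B.comp (X * (1 - X))) (by omega)
    rw [← hr] at this
    omega

end Decomposition

lemma image_mul_one_sub_self_Icc :
    (fun x : ℝ => x * (1 - x)) '' Icc 0 1 = Icc 0 (1 / 4) := by
  ext y
  simp only [mem_image, mem_Icc]
  constructor
  · rintro ⟨x, ⟨hx0, hx1⟩, rfl⟩
    exact ⟨mul_nonneg hx0 (by linarith), by nlinarith [sq_nonneg (x - 1 / 2)]⟩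
  · rintro ⟨hy0, hy1⟩
    have hs := Real.sq_sqrt (show 0 ≤ 1 - 4 * y by linarith)
    have hs1 : √(1 - 4 * y) ≤ 1 := Real.sqrt_le_one.2 (by linarith)
    exact ⟨(1 - √(1 - 4 * y)) / 2,
      ⟨by linarith, by linarith [Real.sqrt_nonneg (1 - 4 * y)]⟩,
      by linear_combination (-1 / 4 : ℝ) * hs⟩

lemma abs_add_mul_le_max_of_mem_uIcc {a b c d t : ℝ} (ht : t ∈ uIcc c d) :
    |a + t * b| ≤ max |a + c * b| |a + d * b| := by
  rw [mem_uIcc] at ht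
  rcases ht with ⟨hc, hd⟩ | ⟨hd, hc⟩ <;> rcases le_total 0 b with hb | hb
  all_goals first
    | exact abs_le_max_abs_abs (by nlinarith) (by nlinarith)
    | exact max_comm |a + d * b| _ ▸ abs_le_max_abs_abs (by nlinarith) (by nlinarith)

lemma abs_aeval_add_mul_le_supNorm {r A B : ℤ[X]}
    (hr : r = A.comp (X * (1 - X)) + X * B.comp (X * (1 - X))) {y t : ℝ}
    (hy : y ∈ Icc 0 (1 / 4)) (ht : y ≤ t * (1 - t)) :
    |aeval y A + t * aeval y B| ≤ supNorm r 0 1 := by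
  have hroot : ∀ x ∈ Icc (0 : ℝ) 1, x * (1 - x) = y →
      |aeval y A + x * aeval y B| ≤ supNorm r 0 1 := by
    intro x hx hxy
    have hrx : aeval x r = aeval y A + x * aeval y B := by
      simp [hr, aeval_comp, hxy]
    exact hrx ▸ abs_aeval_le_supNorm r hx
  obtain ⟨x, hx, hxy⟩ := image_mul_one_sub_self_Icc.symm ▸ hy
  have htx : t ∈ uIcc x (1 - x) := by
    rw [mem_uIcc]
    rcases le_total x (1 - x) with h | h
    · left; constructor <;> nlinarith
    · right; constructor <;> nlinarith
  calc |aeval y A + t * aeval y B|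
      ≤ max |aeval y A + x * aeval y B| |aeval y A + (1 - x) * aeval y B| :=
        abs_add_mul_le_max_of_mem_uIcc htx
    _ ≤ supNorm r 0 1 :=
        max_le (hroot x hx hxy) (hroot (1 - x) ⟨by linarith [hx.2], by linarith [hx.1]⟩
          (by rw [← hxy]; ring))

lemma exists_supNorm_le_supNorm_of_natDegree_le_two_mul {n : ℕ} (hn : 0 < n) {r : ℤ[X]}
    (hr0 : r ≠ 0) (hdeg : r.natDegree ≤ 2 * n) :
    ∃ G : ℤ[X], G ≠ 0 ∧ G.natDegree ≤ n ∧ supNorm G 0 (1 / 4) ≤ supNorm r 0 1 := by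
  obtain ⟨A, B, hr⟩ := exists_eq_comp_add_X_mul_comp r
  obtain ⟨hA, hB⟩ := natDegree_le_of_eq_comp_add_X_mul_comp hn hr hdeg
  have hcandidate : ∀ c : ℤ[X], c.natDegree ≤ 1 →
      (∀ y ∈ Icc (0 : ℝ) (1 / 4), y ≤ aeval y c * (1 - aeval y c)) → A + c * B ≠ 0 →
      ∃ G : ℤ[X], G ≠ 0 ∧ G.natDegree ≤ n ∧ supNorm G 0 (1 / 4) ≤ supNorm r 0 1 := by
    intro c hc hcy hG0
    refine ⟨A + c * B, hG0, ?_, supNorm_le (by norm_num) fun y hy => ?_⟩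
    · have := natDegree_mul_le (p := c) (q := B)
      exact (natDegree_add_le _ _).trans (max_le hA (by omega))
    · simpa [mul_comm] using abs_aeval_add_mul_le_supNorm hr hy (hcy y hy)
  by_cases h2X : A + 2 * X * B = 0
  · refine hcandidate (1 - 2 * X) (by compute_degree!) (fun y hy => ?_) fun h => hr0 ?_
    · simp only [map_sub, map_one, map_mul, map_ofNat, aeval_X]
      nlinarith [hy.1, hy.2]
    · have h4X : (1 - 4 * X) * B = 0 := by linear_combination h - h2X
      have hB0 : B = 0 := (mul_eq_zero.1 h4X).resolve_left fun h1 => by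
        simpa using congrArg (eval 0) h1
      rw [hr, hB0, show A = 0 by simpa [hB0] using h2X]
      simp
  · refine hcandidate (2 * X) (by compute_degree!) (fun y hy => ?_) h2X
    simp only [map_mul, map_ofNat, aeval_X]
    nlinarith [hy.1, hy.2]

theorem stmt_6_general (n : ℕ) (hn : 0 < n) (p : Polynomial ℤ)
    (hdeg : p.natDegree = n)
    (hcheb : supNorm p 0 (1 / 4) ^ ((1 : ℝ) / n) = tZ n 0 (1 / 4)) :
    supNorm (p.comp (Polynomial.X * (1 - Polynomial.X))) 0 1 ^ ((1 : ℝ) / (2 * n)) =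
      tZ (2 * n) 0 1 := by
  have hsup : supNorm (p.comp (X * (1 - X))) 0 1 = supNorm p 0 (1 / 4) :=
    supNorm_comp p _ (by simpa using image_mul_one_sub_self_Icc)
  have hqdeg : (p.comp (X * (1 - X))).natDegree = 2 * n := by
    rw [natDegree_comp_X_mul_one_sub_X, hdeg]
  have hq0 : p.comp (X * (1 - X)) ≠ 0 := fun h => by simp [h] at hqdeg; omega
  rw [show (1 : ℝ) / (2 * n) = 1 / ((2 * n : ℕ) : ℝ) by push_cast; rfl]
  refine le_antisymm (le_tZ fun r hr0 hrdeg => ?_) (tZ_le zero_le_one hq0 hqdeg.le)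
  obtain ⟨G, hG0, hGdeg, hGr⟩ := exists_supNorm_le_supNorm_of_natDegree_le_two_mul hn hr0 hrdeg
  have hpG := supNorm_le_of_rpow_eq_tZ hn (by norm_num) hcheb hG0 hGdeg
  exact Real.rpow_le_rpow (supNorm_nonneg _ zero_le_one) (hsup ▸ hpG.trans hGr) (by positivity)

theorem stmt_6 (n : ℕ) (hn : 0 < n) (p : Polynomial ℤ) (hp0 : p ≠ 0)
    (hdeg : p.natDegree = n)
    (hcheb : supNorm p 0 (1 / 4) ^ ((1 : ℝ) / n) = tZ n 0 (1 / 4)) :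
    supNorm (p.comp (Polynomial.X * (1 - Polynomial.X))) 0 1 ^ ((1 : ℝ) / (2 * n)) =
      tZ (2 * n) 0 1 :=
  stmt_6_general n hn p hdeg hcheb
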